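/- Let G be a group with finite symmetric generating set S, and H a finite group. For a finite connected set A ⊆ G containing e with outer boundary dA in the Cayley graph X(G,S), let ν_{A,dA} = ν_A * ν̄_{dA} in the group algebra of H ≀ G. Then for distinct such sets A and B, ν_{A,dA} * ν_{B,dB} = 0. -/

import Mathlib

open Function MonoidAlgebra
open scoped Classical
set_option linter.unusedSectionVars false

noncomputable section

variable (G H : Type) [Group G] [Group H] [Fintype H]

/-- The automorphism `L_g` of the full group of configurations `G → H`,
`(L_g η)(x) = η (g⁻¹ x)`. -/
def lampAut (g : G) : (G → H) ≃* (G → H) where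
  toFun η := fun x => η (g⁻¹ * x)
  invFun η := fun x => η (g * x)
  left_inv η := by funext x; simp [← mul_assoc]
  right_inv η := by funext x; simp [← mul_assoc]
  map_mul' η η' := rfl

/-- The action homomorphism `G →* MulAut (G → H)`. -/
def lampHom : G →* MulAut (G → H) where
  toFun := lampAut G H
  map_one' := by ext η x; simp [lampAut]
  map_mul' g₁ g₂ := by ext η x; simp [lampAut, MulAut.mul_apply, mul_assoc]

/-- The unrestricted wreath product `(H^G) ⋊ G`. -/
abbrev WrFull := (G → H) ⋊[lampHom G H] G

/-- The (restricted) wreath product `H ≀ G = (⊕_G H) ⋊ G`, realized as the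
subgroup of the unrestricted wreath product consisting of the elements whose
configuration has finite support. -/
def Wreath : Subgroup (WrFull G H) where
  carrier := {w | (mulSupport w.left).Finite}
  one_mem' := by
    simp only [Set.mem_setOf_eq, SemidirectProduct.one_left]
    simp [mulSupport]
  mul_mem' := by
    intro a b ha hb
    simp only [Set.mem_setOf_eq, SemidirectProduct.mul_left] at *
    refine (ha.union ?_).subset (mulSupport_mul _ _)
    have : mulSupport (lampHom G H a.right b.left) =
        (fun x => (a.right)⁻¹ * x) ⁻¹' mulSupport b.left := by
      ext x
      simp [lampHom, lampAut, mulSupport]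
    rw [this]
    exact hb.preimage (by
      intro x _ y _ h
      simpa using mul_left_cancel h)
  inv_mem' := by
    intro a ha
    simp only [Set.mem_setOf_eq, SemidirectProduct.inv_left] at *
    have : mulSupport (lampHom G H (a.right)⁻¹ (a.left)⁻¹) =
        (fun x => a.right * x) ⁻¹' mulSupport a.left := by
      ext x
      simp [lampHom, lampAut, mulSupport]
    rw [this]
    exact ha.preimage (by
      intro x _ y _ h
      simpa using mul_left_cancel h)

/-- The configuration which has state `h` at the point `g` and is trivial
elsewhere. -/
def pointConf (g : G) (h : H) : G → H := fun x => if x = g then h else 1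

lemma pointConf_finite (g : G) (h : H) : (mulSupport (pointConf G H g h)).Finite := by
  apply (Set.finite_singleton g).subset
  intro x hx
  by_contra hxg
  simp only [Set.mem_singleton_iff] at hxg
  simp [mulSupport, pointConf, hxg] at hx

/-- A finitely supported configuration together with a position, as an
element of the wreath product. -/
def wr (η : G → H) (hη : (mulSupport η).Finite) (g : G) : Wreath G H :=
  ⟨⟨η, g⟩, hη⟩

/-- The embedding of the base group `G` in the wreath product, `g ↦ (1, g)`. -/
def embG (g : G) : Wreath G H :=
  wr G H 1 (by simp [mulSupport]) g

/-- The embedding of the lamp group `H` in the wreath product,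
`h ↦ (η_e^h, e)`. -/
def embH (h : H) : Wreath G H :=
  wr G H (pointConf G H 1 h) (pointConf_finite G H 1 h) 1

/-- The point mass `δ_g` at the embedded element `g ∈ G`, as an element of the
group algebra of the wreath product. -/
def deltaG (g : G) : MonoidAlgebra ℝ (Wreath G H) :=
  MonoidAlgebra.single (embG G H g) 1

/-- The uniform probability measure `ν` on the embedded copy of `H` inside the
wreath product. -/
def nu : MonoidAlgebra ℝ (Wreath G H) :=
  ∑ h : H, MonoidAlgebra.single (embH G H h) ((Fintype.card H : ℝ)⁻¹)

/-- The translated uniform measure `ν_g = δ_g * ν * δ_{g⁻¹}`. -/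
def nuAt (g : G) : MonoidAlgebra ℝ (Wreath G H) :=
  deltaG G H g * nu G H * deltaG G H g⁻¹

/-- The complementary projection `ν̄_g = δ_{(1,e)} - ν_g`. -/
def nuBarAt (g : G) : MonoidAlgebra ℝ (Wreath G H) :=
  1 - nuAt G H g

end

/-- The Cayley graph of `G` with respect to `S` (for symmetric `S` the second
condition in the adjacency is redundant). -/
def cayley (G : Type) [Group G] (S : Finset G) : SimpleGraph G where
  Adj x y := x ≠ y ∧ x⁻¹ * y ∈ S ∧ y⁻¹ * x ∈ S
  symm := by
    refine ⟨fun x y h => ?_⟩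
    exact ⟨h.1.symm, h.2.2, h.2.1⟩
  loopless := ⟨fun x h => h.1 rfl⟩

/-- The outer vertex boundary of the finite set `A` in the Cayley graph of `G`
with respect to the (symmetric) set `S`: all vertices outside `A` with a
neighbour in `A`. -/
noncomputable def cayleyBoundary (G : Type) [Group G] (S A : Finset G) : Finset G :=
  (A.biUnion fun x => S.image fun s => x * s).filter (· ∉ A)

/-!
If `A ≠ B`, some point of one set, say `b ∈ B`, lies outside the other. A path in `B` from `e`
to `b` leaves `A`, so it meets `∂A` in a point `y ∈ B`; symmetrically one finds
`y ∈ A ∩ ∂B`. The product `ν_{A,dA} * ν_{B,dB}` then contains both `ν_y` and `ν̄_y = 1 - ν_y`,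
and `ν_y (1 - ν_y) = 0` because `ν_y`, a conjugate of the uniform measure on a finite
subgroup, is idempotent. All `ν_x` commute (lamps at distinct sites commute), so the
computation takes place in the commutative subalgebra they generate, where it is a
divisibility argument.
-/

open scoped IsMulCommutative

section Wreath

variable (G H : Type) [Group G] [Group H] [Fintype H]

noncomputable def lampAt (x : G) : H →* Wreath G H where
  toFun h := ⟨⟨pointConf G H x h, 1⟩, pointConf_finite G H x h⟩
  map_one' := by
    refine Subtype.ext (SemidirectProduct.ext ?_ rfl)
    funext z
    simp [pointConf]
  map_mul' h h' := by
    refine Subtype.ext (SemidirectProduct.ext ?_ (mul_one 1).symm)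
    funext z
    by_cases hz : z = x <;> simp [pointConf, hz]

variable {G H} in
lemma lampAt_commute {x y : G} (hxy : x ≠ y) (h h' : H) :
    Commute (lampAt G H x h) (lampAt G H y h') := by
  refine Subtype.ext (SemidirectProduct.ext ?_ rfl)
  funext z
  by_cases hzx : z = x <;> by_cases hzy : z = y
  · exact absurd (hzx ▸ hzy) hxy
  all_goals simp [lampAt, pointConf, hzx, hzy, hxy, hxy.symm]

lemma embG_mul_embH_mul_embG_inv (x : G) (h : H) :
    embG G H x * embH G H h * embG G H x⁻¹ = lampAt G H x h := by
  refine Subtype.ext (SemidirectProduct.ext ?_ (by simp [embG, embH, wr, lampAt]))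
  show 1 * lampHom G H x (pointConf G H 1 h) * lampHom G H (x * 1) 1 = pointConf G H x h
  funext z
  by_cases hz : z = x
  · simp [lampHom, lampAut, pointConf, hz]
  · simp [lampHom, lampAut, pointConf, hz, inv_mul_eq_one, Ne.symm hz]

end Wreath

section UniformMeasure

variable {k M H : Type*} [Field k] [CharZero k] [Monoid M] [Group H] [Fintype H]

lemma single_one_mul_sum_single (φ : H →* M) (a : H) (c : k) :
    single (φ a) 1 * ∑ h : H, single (φ h) c = ∑ h : H, single (φ h) c := by
  simp only [Finset.mul_sum, single_mul_single, one_mul, ← map_mul]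
  exact Fintype.sum_equiv (Equiv.mulLeft a) _ _ fun _ => rfl

lemma isIdempotentElem_sum_single_inv_card (φ : H →* M) :
    IsIdempotentElem (∑ h : H, single (φ h) (Fintype.card H : k)⁻¹) := by
  set c : k := (Fintype.card H : k)⁻¹
  have hc : (Fintype.card H : k) * c = 1 := mul_inv_cancel₀ (by simp)
  calc (∑ h : H, single (φ h) c) * ∑ h : H, single (φ h) c
      = ∑ a : H, c • (single (φ a) 1 * ∑ h : H, single (φ h) c) := by
        simp only [Finset.sum_mul, ← smul_mul_assoc, smul_single', mul_one]
    _ = ∑ h : H, single (φ h) c := by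
        simp only [single_one_mul_sum_single, Finset.sum_const, Finset.card_univ, smul_smul,
          ← Nat.cast_smul_eq_nsmul k, hc, one_smul]

end UniformMeasure

lemma Finset.noncommProd_coe_eq_coe_prod {M S ι : Type*} [Monoid M] [SetLike S M]
    [SubmonoidClass S M] {T : S} [IsMulCommutative T] (s : Finset ι) (f : ι → T) (comm) :
    s.noncommProd (fun i => (f i : M)) comm = ((∏ i ∈ s, f i : T) : M) := by
  rw [← Finset.noncommProd_eq_prod]
  exact (map_noncommProd s f _ (SubmonoidClass.subtype T)).symm

lemma IsIdempotentElem.prod_mul_prod_one_sub_mul_eq_zero {R ι : Type*} [CommRing R]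
    {e : ι → R} {y : ι} (he : IsIdempotentElem (e y)) {A D A' D' : Finset ι}
    (hy : y ∈ A ∧ y ∈ D' ∨ y ∈ D ∧ y ∈ A') :
    ((∏ x ∈ A, e x) * ∏ x ∈ D, (1 - e x)) * ((∏ x ∈ A', e x) * ∏ x ∈ D', (1 - e x)) = 0 := by
  refine zero_dvd_iff.mp ?_
  rcases hy with ⟨hyA, hyD'⟩ | ⟨hyD, hyA'⟩
  · rw [← he.mul_one_sub_self]
    exact mul_dvd_mul (dvd_mul_of_dvd_left (Finset.dvd_prod_of_mem _ hyA) _)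
      (dvd_mul_of_dvd_right (Finset.dvd_prod_of_mem _ hyD') _)
  · rw [← he.one_sub_mul_self]
    exact mul_dvd_mul (dvd_mul_of_dvd_right (Finset.dvd_prod_of_mem _ hyD) _)
      (dvd_mul_of_dvd_left (Finset.dvd_prod_of_mem _ hyA') _)

section Nu

variable (G H : Type) [Group G] [Group H] [Fintype H]

lemma nuAt_eq_sum (x : G) :
    nuAt G H x = ∑ h : H, single (lampAt G H x h) (Fintype.card H : ℝ)⁻¹ := by
  simp only [nuAt, nu, deltaG, Finset.mul_sum, Finset.sum_mul, single_mul_single, one_mul,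
    mul_one, embG_mul_embH_mul_embG_inv]

lemma isIdempotentElem_nuAt (x : G) : IsIdempotentElem (nuAt G H x) := by
  rw [nuAt_eq_sum]
  exact isIdempotentElem_sum_single_inv_card _

lemma nuAt_commute (x y : G) : Commute (nuAt G H x) (nuAt G H y) := by
  rcases eq_or_ne x y with rfl | hxy
  · exact .refl _
  rw [nuAt_eq_sum, nuAt_eq_sum]
  exact .sum_left _ _ _ fun a _ => .sum_right _ _ _ fun b _ =>
    single_commute_single (lampAt_commute hxy a b) (.refl _)

noncomputable abbrev nuAlgebra : Subalgebra ℝ (MonoidAlgebra ℝ (Wreath G H)) :=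
  Algebra.adjoin ℝ (Set.range (nuAt G H))

instance : IsMulCommutative (nuAlgebra G H) :=
  Algebra.isMulCommutative_adjoin ℝ <| by
    rintro _ ⟨x, rfl⟩ _ ⟨y, rfl⟩
    exact (nuAt_commute G H x y).eq

noncomputable def nuIn (x : G) : nuAlgebra G H :=
  ⟨nuAt G H x, Algebra.subset_adjoin ⟨x, rfl⟩⟩

lemma isIdempotentElem_nuIn (x : G) : IsIdempotentElem (nuIn G H x) :=
  Subtype.ext (isIdempotentElem_nuAt G H x)

lemma noncommProd_nuAt (s : Finset G) (comm) :
    s.noncommProd (nuAt G H) comm = ((∏ x ∈ s, nuIn G H x : nuAlgebra G H) : _) :=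
  s.noncommProd_coe_eq_coe_prod (nuIn G H) comm

lemma noncommProd_nuBarAt (s : Finset G) (comm) :
    s.noncommProd (nuBarAt G H) comm = ((∏ x ∈ s, (1 - nuIn G H x) : nuAlgebra G H) : _) :=
  (s.noncommProd_congr rfl (fun _ _ => rfl) comm).trans
    (s.noncommProd_coe_eq_coe_prod (fun x => 1 - nuIn G H x) _)

end Nu

section Cayley

variable {G : Type} [Group G] {S A B : Finset G}

lemma mem_cayleyBoundary_of_adj {a b : G} (hab : (cayley G S).Adj a b) (ha : a ∈ A)
    (hb : b ∉ A) : b ∈ cayleyBoundary G S A :=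
  Finset.mem_filter.mpr ⟨Finset.mem_biUnion.mpr
    ⟨a, ha, Finset.mem_image.mpr ⟨a⁻¹ * b, hab.2.1, mul_inv_cancel_left a b⟩⟩, hb⟩

lemma exists_mem_cayleyBoundary_of_connected
    (hB : ((cayley G S).induce (B : Set G)).Connected) {u v : G} (hu : u ∈ B) (hv : v ∈ B)
    (huA : u ∈ A) (hvA : v ∉ A) : ∃ y ∈ B, y ∈ cayleyBoundary G S A := by
  obtain ⟨d, -, hd₁, hd₂⟩ := (hB.preconnected ⟨u, hu⟩ ⟨v, hv⟩).some.exists_boundary_dart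
    {z | (z : G) ∈ A} huA hvA
  exact ⟨d.snd, d.snd.2, mem_cayleyBoundary_of_adj d.adj hd₁ hd₂⟩

lemma exists_mem_cayleyBoundary_of_ne (h1A : (1 : G) ∈ A) (h1B : (1 : G) ∈ B)
    (hA : ((cayley G S).induce (A : Set G)).Connected)
    (hB : ((cayley G S).induce (B : Set G)).Connected) (hAB : A ≠ B) :
    ∃ y, y ∈ A ∧ y ∈ cayleyBoundary G S B ∨ y ∈ cayleyBoundary G S A ∧ y ∈ B := by
  by_cases hBA : B ⊆ A
  · obtain ⟨a, haA, haB⟩ := Finset.exists_of_ssubset (hBA.ssubset_of_ne hAB.symm)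
    obtain ⟨y, hyA, hy⟩ := exists_mem_cayleyBoundary_of_connected hA h1A haA h1B haB
    exact ⟨y, .inl ⟨hyA, hy⟩⟩
  · obtain ⟨b, hbB, hbA⟩ := Finset.not_subset.mp hBA
    obtain ⟨y, hyB, hy⟩ := exists_mem_cayleyBoundary_of_connected hB h1B hbB h1A hbA
    exact ⟨y, .inr ⟨hy, hyB⟩⟩

end Cayley

theorem nuBoundary_orthogonal_general (G H : Type) [Group G] [Group H] [Fintype H]
    (S : Finset G) (A B : Finset G)
    (h1A : (1 : G) ∈ A) (h1B : (1 : G) ∈ B)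
    (hAconn : ((cayley G S).induce (A : Set G)).Connected)
    (hBconn : ((cayley G S).induce (B : Set G)).Connected)
    (hAB : A ≠ B)
    (hcA : (A : Set G).Pairwise fun a b => Commute (nuAt G H a) (nuAt G H b))
    (hcdA : ((cayleyBoundary G S A : Finset G) : Set G).Pairwise
      fun a b => Commute (nuBarAt G H a) (nuBarAt G H b))
    (hcB : (B : Set G).Pairwise fun a b => Commute (nuAt G H a) (nuAt G H b))
    (hcdB : ((cayleyBoundary G S B : Finset G) : Set G).Pairwise
      fun a b => Commute (nuBarAt G H a) (nuBarAt G H b)) :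
    (A.noncommProd (nuAt G H) hcA *
        (cayleyBoundary G S A).noncommProd (nuBarAt G H) hcdA) *
      (B.noncommProd (nuAt G H) hcB *
        (cayleyBoundary G S B).noncommProd (nuBarAt G H) hcdB) = 0 := by
  obtain ⟨y, hy⟩ := exists_mem_cayleyBoundary_of_ne h1A h1B hAconn hBconn hAB
  simp only [noncommProd_nuAt, noncommProd_nuBarAt, ← Subalgebra.coe_mul,
    ZeroMemClass.coe_eq_zero]
  exact (isIdempotentElem_nuIn G H y).prod_mul_prod_one_sub_mul_eq_zero hy

/-- Let `A ≠ B` be finite connected subsets of the Cayley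
graph `X(G,S)` containing the identity, with outer boundaries `dA`, `dB`.
Then in the group algebra of `H ≀ G` one has `ν_{A,dA} * ν_{B,dB} = 0`. -/
theorem nuBoundary_orthogonal (G H : Type) [Group G] [Group H] [Fintype H]
    (S : Finset G) (hS : ∀ s ∈ S, s⁻¹ ∈ S) (A B : Finset G)
    (h1A : (1 : G) ∈ A) (h1B : (1 : G) ∈ B)
    (hAconn : ((cayley G S).induce (A : Set G)).Connected)
    (hBconn : ((cayley G S).induce (B : Set G)).Connected)
    (hAB : A ≠ B)
    (hcA : (A : Set G).Pairwise fun a b => Commute (nuAt G H a) (nuAt G H b))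
    (hcdA : ((cayleyBoundary G S A : Finset G) : Set G).Pairwise
      fun a b => Commute (nuBarAt G H a) (nuBarAt G H b))
    (hcB : (B : Set G).Pairwise fun a b => Commute (nuAt G H a) (nuAt G H b))
    (hcdB : ((cayleyBoundary G S B : Finset G) : Set G).Pairwise
      fun a b => Commute (nuBarAt G H a) (nuBarAt G H b)) :
    (A.noncommProd (nuAt G H) hcA *
        (cayleyBoundary G S A).noncommProd (nuBarAt G H) hcdA) *
      (B.noncommProd (nuAt G H) hcB *
        (cayleyBoundary G S B).noncommProd (nuBarAt G H) hcdB) = 0 :=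
  nuBoundary_orthogonal_general G H S A B h1A h1B hAconn hBconn hAB hcA hcdA hcB hcdB
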